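/- For every m ∈ ℤ, the charge-m subspace F^(m) is irreducible under the gl_∞-action: each operator ψ_i ψ_j* (i, j ∈ ℤ) preserves F^(m), and the only ℂ-subspaces of F^(m) invariant under all the operators ψ_i ψ_j* are 0 and F^(m) itself. -/

import Mathlib

/-!
On a basis vector, `ψ_i ψ_j^*` is `0` or `±1` times the monomial obtained by trading the entry `j`
for `i`, so it preserves the charge. The diagonal operator `ψ_i ψ_i^*` projects onto the
monomials containing `i`, and two distinct monomials of equal charge are separated by some `i`;
hence a nonzero vector of minimal support in an invariant subspace is a multiple of a basis vector.
Two monomials of equal charge differ in finitely many entries, and trading them one at a time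
by operators `ψ_i ψ_j^*` carries one basis vector to the other, so the subspace is everything.
-/

open Finsupp

/-- A semi-infinite monomial: a strictly decreasing sequence `seq : ℕ → ℤ` such that
for some `m : ℤ` (its charge) one has `seq k = m - k` for all sufficiently large `k`. -/
structure SIM : Type where
  seq : ℕ → ℤ
  anti : StrictAnti seq
  ex_charge : ∃ m : ℤ, ∃ N : ℕ, ∀ k, N ≤ k → seq k = m - (k : ℤ)

/-- Full fermionic Fock space: the free `ℂ`-vector space on the set of all
semi-infinite monomials. -/
abbrev FockF : Type := SIM →₀ ℂ

namespace SIM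

/-- `φ` is a semi-infinite monomial of charge `m`. -/
def HasCharge (φ : SIM) (m : ℤ) : Prop := ∃ N : ℕ, ∀ k, N ≤ k → φ.seq k = m - (k : ℤ)

theorem exists_lt (φ : SIM) (j : ℤ) : ∃ n : ℕ, φ.seq n < j := by
  obtain ⟨m, N, hN⟩ := φ.ex_charge
  refine ⟨N + (m - j).toNat + 1, ?_⟩
  have h1 := hN (N + (m - j).toNat + 1) (by omega)
  omega

/-- The position at which `j` is inserted into `φ`: the least `n` with `φ.seq n < j`.
If `i_s > j > i_{s+1}` this equals `s + 1`, and it equals `0` if `j > i_0`. -/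
noncomputable def wedgePos (φ : SIM) (j : ℤ) : ℕ := Nat.find (φ.exists_lt j)

/-- The semi-infinite monomial obtained from `φ` by inserting `j` (assuming `j` does not
occur in `φ`). -/
noncomputable def insertSIM (φ : SIM) (j : ℤ) (hj : ∀ s, φ.seq s ≠ j) : SIM where
  seq k := if k < φ.wedgePos j then φ.seq k else if k = φ.wedgePos j then j else φ.seq (k - 1)
  anti := by
    have hs : φ.seq (φ.wedgePos j) < j := Nat.find_spec (φ.exists_lt j)
    have hm : ∀ k, k < φ.wedgePos j → j < φ.seq k := by
      intro k hk
      have h1 := Nat.find_min (φ.exists_lt j) hk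
      have h2 := hj k
      omega
    have ha : ∀ a b : ℕ, a < b → φ.seq b < φ.seq a := fun a b h => φ.anti h
    apply strictAnti_nat_of_succ_lt
    intro k
    try dsimp only
    rcases lt_trichotomy k (φ.wedgePos j) with hk | hk | hk
    · rcases Nat.lt_or_ge (k + 1) (φ.wedgePos j) with hk1 | hk1
      · rw [if_pos hk, if_pos hk1]
        exact ha k (k + 1) (by omega)
      · have hk1' : k + 1 = φ.wedgePos j := by omega
        rw [if_pos hk, if_neg (by omega), if_pos hk1']
        exact hm k hk
    · rw [if_neg (by omega), if_neg (by omega), if_neg (by omega), if_pos hk,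
        (by omega : k + 1 - 1 = k), hk]
      exact hs
    · rw [if_neg (by omega), if_neg (by omega), if_neg (by omega), if_neg (by omega),
        (by omega : k + 1 - 1 = k)]
      exact ha (k - 1) k (by omega)
  ex_charge := by
    obtain ⟨m, N, hN⟩ := φ.ex_charge
    refine ⟨m + 1, N + φ.wedgePos j + 1, fun k hk => ?_⟩
    try dsimp only
    rw [if_neg (by omega), if_neg (by omega)]
    have h3 := hN (k - 1) (by omega)
    omega

/-- The semi-infinite monomial obtained from `φ` by deleting the entry in position `s`. -/
noncomputable def removeSIM (φ : SIM) (s : ℕ) : SIM where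
  seq k := if k < s then φ.seq k else φ.seq (k + 1)
  anti := by
    apply strictAnti_nat_of_succ_lt
    intro k
    try dsimp only
    split_ifs <;> exact φ.anti (by omega)
  ex_charge := by
    obtain ⟨m, N, hN⟩ := φ.ex_charge
    refine ⟨m - 1, N + s, fun k hk => ?_⟩
    try dsimp only
    rw [if_neg (by omega)]
    have h3 := hN (k + 1) (by omega)
    omega

end SIM

open Classical in
/-- The wedging operator `ψ_j` on full fermionic Fock space.  On a basis element
`φ = (i_0, i_1, ...)` it is `0` if `j = i_s` for some `s`, and otherwise it is
`(-1)^n` times the basis element obtained by inserting `j` in position `n`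
(so `(-1)^{s+1}` when `i_s > j > i_{s+1}`, and `+1` when `j > i_0`). -/
noncomputable def psi (j : ℤ) : FockF →ₗ[ℂ] FockF :=
  Finsupp.lift FockF ℂ SIM fun φ =>
    if hj : ∀ s, φ.seq s ≠ j then
      ((-1 : ℂ) ^ (φ.wedgePos j)) • Finsupp.single (φ.insertSIM j hj) 1
    else 0

open Classical in
/-- The contracting operator `ψ_j^*` on full fermionic Fock space.  On a basis element
`φ = (i_0, i_1, ...)` it is `0` if `j ≠ i_s` for all `s`, and `(-1)^s` times the basis
element obtained by deleting `i_s` if `j = i_s`. -/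
noncomputable def psiStar (j : ℤ) : FockF →ₗ[ℂ] FockF :=
  Finsupp.lift FockF ℂ SIM fun φ =>
    if hj : ∃ s, φ.seq s = j then
      ((-1 : ℂ) ^ hj.choose) • Finsupp.single (φ.removeSIM hj.choose) 1
    else 0

/-- The charge-`m` subspace `F^{(m)}` of full fermionic Fock space: the span of the
semi-infinite monomials of charge `m`. -/
noncomputable def chargeSubspace (m : ℤ) : Submodule ℂ FockF :=
  Submodule.span ℂ {x : FockF | ∃ φ : SIM, φ.HasCharge m ∧ x = Finsupp.single φ 1}

namespace SIM

theorem ext {φ ψ : SIM} (h : φ.seq = ψ.seq) : φ = ψ := by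
  cases φ; cases ψ; cases h; rfl

theorem seq_injective (φ : SIM) : Function.Injective φ.seq := φ.anti.injective

theorem insertSIM_seq (φ : SIM) (j : ℤ) (hj : ∀ s, φ.seq s ≠ j) (k : ℕ) :
    (φ.insertSIM j hj).seq k =
      if k < φ.wedgePos j then φ.seq k else if k = φ.wedgePos j then j else φ.seq (k - 1) := rfl

theorem removeSIM_seq (φ : SIM) (s k : ℕ) :
    (φ.removeSIM s).seq k = if k < s then φ.seq k else φ.seq (k + 1) := rfl

theorem range_insertSIM (φ : SIM) (j : ℤ) (hj : ∀ s, φ.seq s ≠ j) :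
    Set.range (φ.insertSIM j hj).seq = insert j (Set.range φ.seq) := by
  ext x
  constructor
  · rintro ⟨k, rfl⟩
    rw [insertSIM_seq]
    split_ifs
    · exact Or.inr ⟨k, rfl⟩
    · exact Or.inl rfl
    · exact Or.inr ⟨k - 1, rfl⟩
  · rintro (rfl | ⟨k, rfl⟩)
    · exact ⟨φ.wedgePos x, by rw [insertSIM_seq, if_neg (lt_irrefl _), if_pos rfl]⟩
    · by_cases hk : k < φ.wedgePos j
      · exact ⟨k, by rw [insertSIM_seq, if_pos hk]⟩
      · exact ⟨k + 1, by rw [insertSIM_seq, if_neg (by omega), if_neg (by omega),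
          Nat.add_sub_cancel]⟩

theorem range_removeSIM (φ : SIM) (s : ℕ) :
    Set.range (φ.removeSIM s).seq = Set.range φ.seq \ {φ.seq s} := by
  ext x
  constructor
  · rintro ⟨k, rfl⟩
    rw [removeSIM_seq]
    split_ifs
    · exact ⟨⟨k, rfl⟩, fun he => by have := φ.seq_injective he; omega⟩
    · exact ⟨⟨k + 1, rfl⟩, fun he => by have := φ.seq_injective he; omega⟩
  · rintro ⟨⟨k, rfl⟩, hk⟩
    have hks : k ≠ s := fun h => hk (by rw [h]; rfl)
    by_cases h : k < s
    · exact ⟨k, by rw [removeSIM_seq, if_pos h]⟩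
    · exact ⟨k - 1, by rw [removeSIM_seq, if_neg (by omega), Nat.sub_add_cancel (by omega)]⟩

theorem removeSIM_seq_ne (φ : SIM) (s t : ℕ) : (φ.removeSIM s).seq t ≠ φ.seq s :=
  fun h => ((φ.range_removeSIM s).subset ⟨t, rfl⟩).2 h

theorem wedgePos_removeSIM (φ : SIM) (s : ℕ) : (φ.removeSIM s).wedgePos (φ.seq s) = s := by
  rw [wedgePos, Nat.find_eq_iff]
  constructor
  · rw [removeSIM_seq, if_neg (lt_irrefl _)]
    exact φ.anti (Nat.lt_succ_self s)
  · intro k hk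
    rw [removeSIM_seq, if_pos hk, not_lt]
    exact (φ.anti hk).le

theorem insertSIM_removeSIM (φ : SIM) (s : ℕ) (h : ∀ t, (φ.removeSIM s).seq t ≠ φ.seq s) :
    (φ.removeSIM s).insertSIM (φ.seq s) h = φ := by
  refine ext (funext fun k => ?_)
  rw [insertSIM_seq, wedgePos_removeSIM]
  rcases lt_trichotomy k s with hk | rfl | hk
  · rw [if_pos hk, removeSIM_seq, if_pos hk]
  · rw [if_neg (lt_irrefl _), if_pos rfl]
  · rw [if_neg (by omega), if_neg (by omega), removeSIM_seq, if_neg (by omega),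
      Nat.sub_add_cancel (by omega)]

theorem HasCharge.removeSIM {φ : SIM} {m : ℤ} (h : φ.HasCharge m) (s : ℕ) :
    (φ.removeSIM s).HasCharge (m - 1) := by
  obtain ⟨N, hN⟩ := h
  refine ⟨N + s, fun k hk => ?_⟩
  rw [removeSIM_seq, if_neg (by omega), hN (k + 1) (by omega)]
  push_cast
  ring

theorem HasCharge.insertSIM {φ : SIM} {m : ℤ} (h : φ.HasCharge m) {j : ℤ}
    (hj : ∀ s, φ.seq s ≠ j) : (φ.insertSIM j hj).HasCharge (m + 1) := by
  obtain ⟨N, hN⟩ := h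
  refine ⟨N + φ.wedgePos j + 1, fun k hk => ?_⟩
  rw [insertSIM_seq, if_neg (by omega), if_neg (by omega), hN (k - 1) (by omega)]
  omega

/-- Two monomials of the same charge agree from some point on, so an order-preserving
reindexing of one inside the other fixes all large indices, hence all indices. -/
theorem eq_of_range_subset {φ ψ : SIM} {m : ℤ} (hφ : φ.HasCharge m) (hψ : ψ.HasCharge m)
    (h : Set.range φ.seq ⊆ Set.range ψ.seq) : φ = ψ := by
  choose f hf using fun n => h ⟨n, rfl⟩
  have hf_mono : StrictMono f := fun a b hab =>
    ψ.anti.lt_iff_gt.mp (by rw [hf, hf]; exact φ.anti hab)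
  obtain ⟨N₁, hN₁⟩ := hφ
  obtain ⟨N₂, hN₂⟩ := hψ
  have hf_large : ∀ k, N₁ + N₂ ≤ k → f k = k := fun k hk =>
    ψ.seq_injective (by rw [hf, hN₁ k (by omega), hN₂ k (by omega)])
  have hf_id : ∀ k, f k = k := fun k => by
    have h₁ := hf_mono.id_le k
    have h₂ := hf_mono.add_le_nat (N₁ + N₂) k
    rw [hf_large (N₁ + N₂ + k) (by omega)] at h₂
    simp only [id] at h₁
    omega
  exact ext (funext fun k => by rw [← hf k, hf_id])

theorem exists_mem_range_not_mem_range {φ ψ : SIM} {m : ℤ} (hφ : φ.HasCharge m)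
    (hψ : ψ.HasCharge m) (h : φ ≠ ψ) : ∃ i ∈ Set.range φ.seq, i ∉ Set.range ψ.seq :=
  Set.not_subset.mp fun hsub => h (eq_of_range_subset hφ hψ hsub)

theorem finite_range_sdiff_range {φ ψ : SIM} {m : ℤ} (hφ : φ.HasCharge m)
    (hψ : ψ.HasCharge m) : (Set.range φ.seq \ Set.range ψ.seq).Finite := by
  obtain ⟨N₁, hN₁⟩ := hφ
  obtain ⟨N₂, hN₂⟩ := hψ
  refine ((Set.finite_Iio (N₁ + N₂)).image φ.seq).subset ?_
  rintro _ ⟨⟨k, rfl⟩, hk⟩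
  refine ⟨k, Set.mem_Iio.mpr (not_le.mp fun hle => hk ⟨k, ?_⟩), rfl⟩
  rw [hN₁ k (by omega), hN₂ k (by omega)]

end SIM

theorem psiStar_single_of_seq_eq {φ : SIM} {s : ℕ} {j : ℤ} (hs : φ.seq s = j) :
    psiStar j (single φ 1) = (-1 : ℂ) ^ s • single (φ.removeSIM s) 1 := by
  have hj : ∃ s, φ.seq s = j := ⟨s, hs⟩
  have hchoose : hj.choose = s := φ.seq_injective (hj.choose_spec.trans hs.symm)
  rw [psiStar, lift_apply, sum_single_index (by simp), one_smul, dif_pos hj, hchoose]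

theorem psiStar_single_of_forall_ne {φ : SIM} {j : ℤ} (hj : ∀ s, φ.seq s ≠ j) :
    psiStar j (single φ 1) = 0 := by
  rw [psiStar, lift_apply, sum_single_index (by simp), one_smul, dif_neg (not_exists.mpr hj)]

theorem psi_single_of_forall_ne {φ : SIM} {j : ℤ} (hj : ∀ s, φ.seq s ≠ j) :
    psi j (single φ 1) = (-1 : ℂ) ^ φ.wedgePos j • single (φ.insertSIM j hj) 1 := by
  rw [psi, lift_apply, sum_single_index (by simp), one_smul, dif_pos hj]

theorem psi_single_of_seq_eq {φ : SIM} {s : ℕ} {j : ℤ} (hs : φ.seq s = j) :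
    psi j (single φ 1) = 0 := by
  rw [psi, lift_apply, sum_single_index (by simp), one_smul,
    dif_neg (not_forall.mpr ⟨s, not_not.mpr hs⟩)]

theorem psi_psiStar_single {φ : SIM} {s : ℕ} {i j : ℤ} (hs : φ.seq s = j)
    (hi : ∀ t, (φ.removeSIM s).seq t ≠ i) :
    psi i (psiStar j (single φ 1)) =
      (-1 : ℂ) ^ (s + (φ.removeSIM s).wedgePos i) • single ((φ.removeSIM s).insertSIM i hi) 1 := by
  rw [psiStar_single_of_seq_eq hs, map_smul, psi_single_of_forall_ne hi, smul_smul, pow_add]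

theorem psi_psiStar_single_self {φ : SIM} {s : ℕ} {i : ℤ} (hs : φ.seq s = i) :
    psi i (psiStar i (single φ 1)) = single φ 1 := by
  subst hs
  rw [psi_psiStar_single rfl (φ.removeSIM_seq_ne s), SIM.wedgePos_removeSIM,
    SIM.insertSIM_removeSIM, ← two_mul, pow_mul, neg_one_sq, one_pow, one_smul]

open Classical in
theorem psi_psiStar_self (i : ℤ) (x : FockF) :
    psi i (psiStar i x) = x.filter fun φ => i ∈ Set.range φ.seq := by
  induction x using Finsupp.induction_linear with
  | zero => rw [map_zero, map_zero, filter_zero]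
  | add x y hx hy => rw [map_add, map_add, hx, hy, filter_add]
  | single φ b =>
    rw [← smul_single_one, map_smul, map_smul, filter_smul]
    by_cases h : i ∈ Set.range φ.seq
    · obtain ⟨s, hs⟩ := h
      rw [psi_psiStar_single_self hs,
        filter_single_of_pos (fun ψ : SIM => i ∈ Set.range ψ.seq) ⟨s, hs⟩]
    · rw [psiStar_single_of_forall_ne (not_exists.mp h), map_zero,
        filter_single_of_neg (fun ψ : SIM => i ∈ Set.range ψ.seq) h]

theorem psi_psiStar_single_mem_chargeSubspace (i j : ℤ) {φ : SIM} {m : ℤ}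
    (hφ : φ.HasCharge m) : psi i (psiStar j (single φ 1)) ∈ chargeSubspace m := by
  by_cases hj : ∃ s, φ.seq s = j
  · obtain ⟨s, hs⟩ := hj
    by_cases hi : ∀ t, (φ.removeSIM s).seq t ≠ i
    · rw [psi_psiStar_single hs hi]
      refine Submodule.smul_mem _ _ (Submodule.subset_span ⟨_, ?_, rfl⟩)
      simpa using (hφ.removeSIM s).insertSIM hi
    · obtain ⟨t, ht⟩ := not_forall_not.mp hi
      rw [psiStar_single_of_seq_eq hs, map_smul, psi_single_of_seq_eq ht, smul_zero]
      exact Submodule.zero_mem _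
  · rw [psiStar_single_of_forall_ne (not_exists.mp hj), map_zero]
    exact Submodule.zero_mem _

theorem psi_psiStar_mem_chargeSubspace (i j : ℤ) {m : ℤ} {x : FockF}
    (hx : x ∈ chargeSubspace m) : psi i (psiStar j x) ∈ chargeSubspace m := by
  have hle : chargeSubspace m ≤ (chargeSubspace m).comap (psi i ∘ₗ psiStar j) :=
    Submodule.span_le.mpr (by
      rintro _ ⟨φ, hφ, rfl⟩
      exact psi_psiStar_single_mem_chargeSubspace i j hφ)
  exact hle hx

theorem chargeSubspace_eq_supported (m : ℤ) :
    chargeSubspace m = supported ℂ ℂ {φ : SIM | φ.HasCharge m} := by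
  rw [supported_eq_span_single, chargeSubspace]
  congr 1
  ext x
  simp [eq_comm]

theorem hasCharge_of_mem_support {m : ℤ} {x : FockF} (hx : x ∈ chargeSubspace m) {φ : SIM}
    (hφ : φ ∈ x.support) : φ.HasCharge m := by
  rw [chargeSubspace_eq_supported, mem_supported] at hx
  exact hx hφ

theorem exists_single_mem_of_ne_zero {m : ℤ} {S : Submodule ℂ FockF} (hS : S ≤ chargeSubspace m)
    (hinv : ∀ i : ℤ, ∀ x ∈ S, psi i (psiStar i x) ∈ S) {x : FockF} (hx : x ∈ S) (hx0 : x ≠ 0) :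
    ∃ φ : SIM, φ.HasCharge m ∧ single φ 1 ∈ S := by
  classical
  obtain ⟨x, ⟨hx, hx0⟩, hmin⟩ := (measure fun y : FockF => y.support.card).wf.has_min
    {y | y ∈ S ∧ y ≠ 0} ⟨x, hx, hx0⟩
  have hcard : x.support.card ≤ 1 := by
    by_contra! hcard
    obtain ⟨a, ha, b, hb, hab⟩ := Finset.one_lt_card.mp hcard
    obtain ⟨i, hia, hib⟩ := SIM.exists_mem_range_not_mem_range
      (hasCharge_of_mem_support (hS hx) ha) (hasCharge_of_mem_support (hS hx) hb) hab
    refine hmin _ ⟨hinv i x hx, fun h0 => mem_support_iff.mp ha ?_⟩ ?_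
    · rw [← filter_apply_pos (fun ψ : SIM => i ∈ Set.range ψ.seq) x hia, ← psi_psiStar_self, h0,
        Finsupp.zero_apply]
    · rw [psi_psiStar_self]
      exact Finset.card_lt_card (Finset.filter_ssubset.mpr ⟨b, hb, hib⟩)
  obtain ⟨φ, c, hc, rfl⟩ := card_support_eq_one'.mp
    (le_antisymm hcard (Finset.card_pos.mpr (support_nonempty_iff.mpr hx0)))
  refine ⟨φ, hasCharge_of_mem_support (hS hx) (by simp [hc]), ?_⟩
  rw [← (S.smul_mem_iff (inv_ne_zero hc)), smul_single, smul_eq_mul, inv_mul_cancel₀ hc] at hx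
  exact hx

theorem single_mem_of_single_mem {m : ℤ} {S : Submodule ℂ FockF}
    (hinv : ∀ i j : ℤ, ∀ x ∈ S, psi i (psiStar j x) ∈ S) {φ ψ : SIM} (hφ : φ.HasCharge m)
    (hψ : ψ.HasCharge m) (hφS : single φ 1 ∈ S) : single ψ 1 ∈ S := by
  obtain ⟨n, hn⟩ : ∃ n, (Set.range φ.seq \ Set.range ψ.seq).ncard = n := ⟨_, rfl⟩
  induction n generalizing φ with
  | zero =>
    rw [Set.ncard_eq_zero (SIM.finite_range_sdiff_range hφ hψ), Set.sdiff_eq_empty] at hn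
    rwa [← SIM.eq_of_range_subset hφ hψ hn]
  | succ n ih =>
    by_cases hφψ : φ = ψ
    · rwa [← hφψ]
    obtain ⟨j, ⟨s, hs⟩, hjψ⟩ := SIM.exists_mem_range_not_mem_range hφ hψ hφψ
    obtain ⟨i, hiψ, hiφ⟩ := SIM.exists_mem_range_not_mem_range hψ hφ (Ne.symm hφψ)
    have hi : ∀ t, (φ.removeSIM s).seq t ≠ i := fun t ht =>
      hiφ ((φ.range_removeSIM s).subset ⟨t, ht⟩).1
    have hφ'S : single ((φ.removeSIM s).insertSIM i hi) 1 ∈ S := by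
      have h := hinv i j _ hφS
      rwa [psi_psiStar_single hs hi, S.smul_mem_iff (pow_ne_zero _ (neg_ne_zero.mpr one_ne_zero))]
        at h
    have hrange : Set.range ((φ.removeSIM s).insertSIM i hi).seq \ Set.range ψ.seq =
        (Set.range φ.seq \ Set.range ψ.seq) \ {j} := by
      rw [SIM.range_insertSIM, SIM.range_removeSIM, hs, Set.insert_sdiff_of_mem _ hiψ,
        sdiff_right_comm]
    refine ih (by simpa using (hφ.removeSIM s).insertSIM hi) hφ'S ?_
    have hj : j ∈ Set.range φ.seq \ Set.range ψ.seq := ⟨⟨s, hs⟩, hjψ⟩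
    rw [hrange, Set.ncard_sdiff_singleton_of_mem hj, hn, Nat.add_sub_cancel]

/-- for every `m ∈ ℤ`, each operator `ψ_i ψ_j^*` preserves the charge-`m`
subspace `F^{(m)}`, and the only `ℂ`-subspaces of `F^{(m)}` invariant under all the
operators `ψ_i ψ_j^*` are `0` and `F^{(m)}` itself. -/
theorem charge_subspace_glInfinity_irreducible (m : ℤ) :
    (∀ i j : ℤ, ∀ x ∈ chargeSubspace m, psi i (psiStar j x) ∈ chargeSubspace m) ∧
    (∀ S : Submodule ℂ FockF, S ≤ chargeSubspace m →
      (∀ i j : ℤ, ∀ x ∈ S, psi i (psiStar j x) ∈ S) → S = ⊥ ∨ S = chargeSubspace m) := by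
  refine ⟨fun i j x hx => psi_psiStar_mem_chargeSubspace i j hx, fun S hS hinv => ?_⟩
  by_cases hbot : S = ⊥
  · exact Or.inl hbot
  obtain ⟨x, hx, hx0⟩ := Submodule.exists_mem_ne_zero_of_ne_bot hbot
  obtain ⟨φ, hφ, hφS⟩ := exists_single_mem_of_ne_zero hS (fun i => hinv i i) hx hx0
  refine Or.inr (le_antisymm hS (Submodule.span_le.mpr ?_))
  rintro _ ⟨ψ, hψ, rfl⟩
  exact single_mem_of_single_mem hinv hφ hψ hφS
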